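/- Let A = (a_{i,l}) be a j×j real matrix that is symmetric, has a_{i,i} = 1 and 0 ≤ a_{i,l} ≤ 1 - η for some η > 0 whenever i ≠ l, and satisfies the ultrametric inequality a_{i,l} ≥ min(a_{l,p}, a_{i,p}) for all pairwise distinct i, l, p. Then A is invertible. -/

import Mathlib

/-!
Subtracting `min η 1` times the identity from `A` leaves a nonnegative symmetric matrix with
`A i l ≥ min (A i p) (A p l)` for *all* triples (an ultrametric matrix in the sense of
Martínez, Michon and San Martín), so it suffices that such matrices are positive semidefinite.
For `t > 0` the relation `t ≤ A i l` is symmetric and transitive, and the layer-cake formula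
`A i l = ∫ t, [0 < t ≤ A i l]` exhibits `A` as a superposition of the 0/1 matrices `E` of these
partial equivalence relations. Each such `E` equals `E D Eᵀ`, where `D` is diagonal with entries
the reciprocal class sizes, hence is positive semidefinite.
-/

/-- Membership in the class `M_j` of ultrametric matrices from the paper:
symmetric, unit diagonal, off-diagonal entries in `[0, 1-η]`, and
the ultrametric inequality `a i l ≥ min (a l p) (a i p)` for pairwise distinct indices. -/
def MemUltra (η : ℝ) {ι : Type*} [Fintype ι] [DecidableEq ι] (A : Matrix ι ι ℝ) : Prop :=
  A.IsSymm ∧ (∀ i, A i i = 1) ∧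
  (∀ i l, i ≠ l → 0 ≤ A i l ∧ A i l ≤ 1 - η) ∧
  (∀ i l p, i ≠ l → l ≠ p → i ≠ p → min (A l p) (A i p) ≤ A i l)

open Finset Matrix MeasureTheory

namespace Matrix

variable {ι : Type*}

open Classical in
noncomputable def ofRel (R : ι → ι → Prop) : Matrix ι ι ℝ :=
  of fun i l => if R i l then 1 else 0

variable [Fintype ι]

theorem posSemidef_ofRel {R : ι → ι → Prop} (hsymm : ∀ i l, R i l → R l i)
    (htrans : ∀ i k l, R i k → R k l → R i l) : (ofRel R).PosSemidef := by
  classical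
  set c : ι → ℕ := fun k => #{m | R k m}
  have hclass {i k : ι} (hik : R i k) : c k = c i := by
    simp only [c]
    congr 1
    ext m
    simpa using ⟨htrans _ _ _ hik, htrans _ _ _ (hsymm _ _ hik)⟩
  have hfactor : ofRel R = ofRel R * diagonal (fun k => (c k : ℝ)⁻¹) * (ofRel R)ᴴ := by
    ext i l
    rw [mul_apply]
    simp only [mul_diagonal, conjTranspose_apply, star_trivial, ofRel, of_apply]
    by_cases hil : R i l
    · have hl : ∀ k, R l k ↔ R i k := fun k => ⟨htrans _ _ _ hil, htrans _ _ _ (hsymm _ _ hil)⟩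
      have hci : (c i : ℝ) ≠ 0 := by
        simpa [c] using ⟨i, htrans _ _ _ hil (hsymm _ _ hil)⟩
      calc (if R i l then (1 : ℝ) else 0)
          = ∑ k, if R i k then (c i : ℝ)⁻¹ else 0 := by
            rw [sum_ite, sum_const_zero, add_zero, sum_const, nsmul_eq_mul]
            simp [hil, c, hci]
        _ = _ := by
            refine sum_congr rfl fun k _ => ?_
            by_cases hik : R i k
            · simp [hik, hl, hclass hik]
            · simp [hik]
    · rw [if_neg hil]
      refine (sum_eq_zero fun k _ => ?_).symm
      by_cases hik : R i k
      · have hlk : ¬R l k := fun hlk => hil (htrans _ _ _ hik (hsymm _ _ hlk))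
        simp [hlk]
      · simp [hik]
  rw [hfactor]
  exact (PosSemidef.diagonal fun k => by positivity).mul_mul_conjTranspose_same _

theorem dotProduct_mulVec_eq_integral_ofRel {A : Matrix ι ι ℝ} (hA : ∀ i l, 0 ≤ A i l)
    (x : ι → ℝ) :
    x ⬝ᵥ A *ᵥ x = ∫ t, x ⬝ᵥ ofRel (fun i l => t ∈ Set.Ioc 0 (A i l)) *ᵥ x := by
  have hstep (t : ℝ) (i l : ι) :
      ofRel (fun i l => t ∈ Set.Ioc 0 (A i l)) i l = (Set.Ioc 0 (A i l)).indicator 1 t := by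
    simp [ofRel, Set.indicator_apply]
  have hentry (i l : ι) : ∫ t, (Set.Ioc 0 (A i l)).indicator 1 t = A i l := by
    rw [integral_indicator_one measurableSet_Ioc, Real.volume_real_Ioc_of_le (hA i l), sub_zero]
  have hint (i l : ι) : Integrable fun t => x i * ((Set.Ioc 0 (A i l)).indicator 1 t * x l) :=
    (((integrable_indicator_iff measurableSet_Ioc).2
      (integrableOn_const measure_Ioc_lt_top.ne)).mul_const _).const_mul _
  simp only [dotProduct, mulVec, hstep, mul_sum]
  rw [integral_finsetSum _ fun i _ => integrable_finsetSum _ fun l _ => hint i l]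
  refine sum_congr rfl fun i _ => ?_
  rw [integral_finsetSum _ fun l _ => hint i l]
  refine sum_congr rfl fun l _ => ?_
  rw [integral_const_mul, integral_mul_const, hentry]

structure IsUltrametric (A : Matrix ι ι ℝ) : Prop where
  isSymm : A.IsSymm
  nonneg : ∀ i l, 0 ≤ A i l
  min_le : ∀ i l p, min (A i p) (A p l) ≤ A i l

theorem IsUltrametric.posSemidef {A : Matrix ι ι ℝ} (hA : A.IsUltrametric) : A.PosSemidef := by
  refine .of_dotProduct_mulVec_nonneg (isHermitian_iff_isSymm.2 hA.isSymm) fun x => ?_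
  rw [star_trivial, dotProduct_mulVec_eq_integral_ofRel hA.nonneg]
  refine integral_nonneg fun t => (posSemidef_ofRel ?_ ?_).dotProduct_mulVec_nonneg x
  · intro i l hil
    rwa [hA.isSymm.apply i l]
  · intro i p l hip hpl
    exact ⟨hip.1, (le_min hip.2 hpl.2).trans (hA.min_le i l p)⟩

end Matrix

section MemUltra

variable {ι : Type*} [Fintype ι] [DecidableEq ι] {η : ℝ} {A : Matrix ι ι ℝ}

theorem MemUltra.isUltrametric_sub_smul_one {δ : ℝ} (hA : MemUltra η A) (hδη : δ ≤ η)
    (hδ1 : δ ≤ 1) : (A - δ • 1).IsUltrametric := by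
  obtain ⟨hsymm, hdiag, hoff, hmin⟩ := hA
  have hentry (i l : ι) : (A - δ • 1) i l = if i = l then 1 - δ else A i l := by
    by_cases hil : i = l <;> simp [hil, hdiag]
  have hle (i l : ι) : (A - δ • 1) i l ≤ 1 - δ := by
    rw [hentry]
    split_ifs with hil
    · exact le_rfl
    · linarith [(hoff i l hil).2]
  refine ⟨by simp [IsSymm, transpose_sub, hsymm.eq], fun i l => ?_, fun i l p => ?_⟩
  · rw [hentry]
    split_ifs with hil
    · linarith
    · exact (hoff i l hil).1
  · by_cases hil : i = l
    · subst hil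
      exact (min_le_left _ _).trans ((hle i p).trans (by simp [hentry]))
    by_cases hpi : p = i
    · subst hpi; exact min_le_right _ _
    by_cases hpl : p = l
    · subst hpl; exact min_le_left _ _
    simp only [hentry, if_neg hil, if_neg (Ne.symm hpi), if_neg hpl, hsymm.apply l p]
    rw [min_comm]
    exact hmin i l p hil (Ne.symm hpl) (Ne.symm hpi)

theorem MemUltra.posDef (hη : 0 < η) (hA : MemUltra η A) : A.PosDef := by
  have hδ : 0 < min η 1 := lt_min hη one_pos
  have hsplit := PosDef.posSemidef_add (hA.isUltrametric_sub_smul_one (min_le_left η 1)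
    (min_le_right η 1)).posSemidef (PosDef.one.smul hδ)
  rwa [sub_add_cancel] at hsplit

end MemUltra

theorem ultrametric_matrix_invertible {η : ℝ} (hη : 0 < η) {j : ℕ}
    (A : Matrix (Fin j) (Fin j) ℝ) (hA : MemUltra η A) :
    IsUnit A.det :=
  (isUnit_iff_isUnit_det A).1 (hA.posDef hη).isUnit
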